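/- Let S_n^B be a sum of independent Bernoulli random variables with parameters 1/(2k) for k = 1,…,n. Then P[S_n^B = k] = B(n,k)/(2^n n!) for all k ∈ {0,1,…,n}, where B(n,k) are the B-analogues of the Stirling numbers of the first kind. -/

import Mathlib

/-!
Induction on `n`. The last variable `X_n` is almost surely `0` or `1` and is independent of
`S_{n-1}`, so `P[S_n = k] = (2n-1)/(2n) · P[S_{n-1} = k] + 1/(2n) · P[S_{n-1} = k-1]`;
after multiplying by `2^n n!` this is the recurrence defining `B(n,k)`.
-/

open MeasureTheory ProbabilityTheory
open scoped ENNReal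

/-- The B-analogue Stirling numbers, defined by the recurrence
`B(n+1,k) = B(n,k−1) + (2n+1)·B(n,k)` with `B(0,0) = 1`
(equivalently, coefficients of `(t+1)(t+3)⋯(t+2n−1)`). -/
def stirlingB : ℕ → ℕ → ℕ
  | 0, 0 => 1
  | 0, _ + 1 => 0
  | n + 1, 0 => (2 * n + 1) * stirlingB n 0
  | n + 1, k + 1 => stirlingB n k + (2 * n + 1) * stirlingB n (k + 1)

section

variable {Ω : Type*} [MeasurableSpace Ω] {μ : Measure Ω}

lemma ae_eq_zero_or_eq_one_of_measure_add [IsProbabilityMeasure μ] {L : Ω → ℕ}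
    (hL : Measurable L) (h : μ {ω | L ω = 0} + μ {ω | L ω = 1} = 1) :
    ∀ᵐ ω ∂μ, L ω = 0 ∨ L ω = 1 := by
  have h0 : MeasurableSet {ω | L ω = 0} := hL (measurableSet_singleton 0)
  have h1 : MeasurableSet {ω | L ω = 1} := hL (measurableSet_singleton 1)
  have hdisj : Disjoint {ω | L ω = 0} {ω | L ω = 1} :=
    Set.disjoint_left.2 fun ω h0 h1 => by simp_all
  have : μ ({ω | L ω = 0} ∪ {ω | L ω = 1}) = 1 := by rw [measure_union hdisj h1, h]
  exact (prob_compl_eq_zero_iff (h0.union h1)).2 this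

lemma ProbabilityTheory.IndepFun.measure_add_eq_of_ae_eq_zero_or_eq_one {S L : Ω → ℕ}
    (hS : Measurable S) (hL : Measurable L) (hSL : IndepFun S L μ)
    (h01 : ∀ᵐ ω ∂μ, L ω = 0 ∨ L ω = 1) (k : ℕ) :
    μ {ω | S ω + L ω = k} =
      μ {ω | S ω = k} * μ {ω | L ω = 0} + μ {ω | S ω + 1 = k} * μ {ω | L ω = 1} := by
  have hsplit : {ω | S ω + L ω = k} =ᵐ[μ]
      (({ω | S ω = k} ∩ {ω | L ω = 0}) ∪ ({ω | S ω + 1 = k} ∩ {ω | L ω = 1}) : Set Ω) := by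
    refine Filter.eventuallyEq_set.2 ?_
    filter_upwards [h01] with ω hω
    rcases hω with h | h <;> simp [h]
  have hdisj : Disjoint ({ω | S ω = k} ∩ {ω | L ω = 0}) ({ω | S ω + 1 = k} ∩ {ω | L ω = 1}) :=
    Set.disjoint_left.2 fun ω h0 h1 => by simp_all
  have hmeas : MeasurableSet ({ω | S ω + 1 = k} ∩ {ω | L ω = 1}) :=
    ((hS.add_const 1) (measurableSet_singleton k)).inter (hL (measurableSet_singleton 1))
  rw [measure_congr hsplit, measure_union hdisj hmeas]
  congr 1
  · exact hSL.measure_inter_preimage_eq_mul {k} {0} (measurableSet_singleton _)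
      (measurableSet_singleton _)
  · exact (hSL.comp (measurable_id.add_const 1) measurable_id).measure_inter_preimage_eq_mul
      {k} {1} (measurableSet_singleton _) (measurableSet_singleton _)

lemma ENNReal.one_sub_inv_two_mul_succ (n : ℕ) :
    1 - 1 / (2 * ((n : ℝ≥0∞) + 1)) = (2 * n + 1) * (2 * ((n : ℝ≥0∞) + 1))⁻¹ := by
  refine ENNReal.sub_eq_of_eq_add (by simp) ?_
  rw [one_div, ← add_one_mul, show (2 * n + 1 + 1 : ℝ≥0∞) = 2 * (n + 1) by ring,
    ENNReal.mul_inv_cancel (by simp) (by finiteness)]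

lemma inv_cast_two_pow_mul_factorial_succ (n : ℕ) :
    ((2 ^ (n + 1) * (n + 1).factorial : ℕ) : ℝ≥0∞)⁻¹ =
      ((2 ^ n * n.factorial : ℕ) : ℝ≥0∞)⁻¹ * (2 * ((n : ℝ≥0∞) + 1))⁻¹ := by
  rw [← ENNReal.mul_inv (by simp [Nat.factorial_ne_zero]) (by simp)]
  push_cast [Nat.factorial_succ]
  congr 1
  ring

lemma measure_sum_eq_stirlingB_mul_inv [IsProbabilityMeasure μ] (n : ℕ) (X : Fin n → Ω → ℕ)
    (hmeas : ∀ i, Measurable (X i)) (hind : iIndepFun X μ)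
    (hX1 : ∀ i : Fin n, μ {ω | X i ω = 1} = 1 / (2 * ((i : ℕ) + 1) : ℝ≥0∞))
    (hX0 : ∀ i : Fin n, μ {ω | X i ω = 0} = 1 - 1 / (2 * ((i : ℕ) + 1) : ℝ≥0∞)) (k : ℕ) :
    μ {ω | ∑ i, X i ω = k} = stirlingB n k * ((2 ^ n * n.factorial : ℕ) : ℝ≥0∞)⁻¹ := by
  induction n generalizing k with
  | zero => rcases k with _ | k <;> simp [stirlingB]
  | succ n ih =>
    set L := X (Fin.last n)
    have hsum : ∀ ω, ∑ i, X i ω = ∑ i : Fin n, X i.castSucc ω + L ω :=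
      fun ω => Fin.sum_univ_castSucc _
    have hindep : IndepFun (fun ω => ∑ i : Fin n, X i.castSucc ω) L μ := by
      have hlast : Fin.last n ∉ Finset.univ.map Fin.castSuccEmb := by simp
      convert hind.indepFun_finsetSum_of_notMem hmeas hlast using 1
      ext ω
      simp
    have hL1 : μ {ω | L ω = 1} = (2 * ((n : ℝ≥0∞) + 1))⁻¹ := by
      simpa using hX1 (Fin.last n)
    have hL0 : μ {ω | L ω = 0} = (2 * n + 1) * (2 * ((n : ℝ≥0∞) + 1))⁻¹ := by
      rw [hX0, Fin.val_last, ENNReal.one_sub_inv_two_mul_succ]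
    have h01 : ∀ᵐ ω ∂μ, L ω = 0 ∨ L ω = 1 :=
      ae_eq_zero_or_eq_one_of_measure_add (hmeas _) (by
        rw [hX0, ← hX1, tsub_add_cancel_of_le prob_le_one])
    have ih' := ih (fun i => X i.castSucc) (fun i => hmeas _)
      (hind.precomp (Fin.castSucc_injective n)) (fun i => hX1 i.castSucc)
      (fun i => hX0 i.castSucc)
    simp only [hsum]
    rw [hindep.measure_add_eq_of_ae_eq_zero_or_eq_one
      (Finset.measurable_sum _ fun i _ => hmeas _) (hmeas _) h01, ih', hL0, hL1,
      inv_cast_two_pow_mul_factorial_succ]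
    rcases k with _ | k
    · simp only [Nat.add_one_ne_zero, Set.ofPred_false, measure_empty, zero_mul, add_zero,
        stirlingB]
      push_cast
      ring
    · simp only [Nat.add_right_cancel_iff, ih', stirlingB]
      push_cast
      ring

end

theorem stmt_5_general (n : ℕ)
    {Ω : Type*} [MeasurableSpace Ω] (μ : Measure Ω) [IsProbabilityMeasure μ]
    (X : Fin n → Ω → ℕ) (hmeas : ∀ i, Measurable (X i))
    (hind : iIndepFun X μ)
    (hX1 : ∀ i : Fin n, μ {ω | X i ω = 1} = 1 / (2 * ((i : ℕ) + 1) : ℝ≥0∞))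
    (hX0 : ∀ i : Fin n, μ {ω | X i ω = 0} = 1 - 1 / (2 * ((i : ℕ) + 1) : ℝ≥0∞))
    (k : ℕ) :
    μ {ω | ∑ i, X i ω = k} =
      (stirlingB n k : ℝ≥0∞) / ((2 ^ n * n.factorial : ℕ) : ℝ≥0∞) := by
  rw [div_eq_mul_inv]
  exact measure_sum_eq_stirlingB_mul_inv n X hmeas hind hX1 hX0 k

/-- If `S_n^B = X_1 + ⋯ + X_n` is a sum of independent Bernoulli random variables
with `P[X_i = 1] = 1/(2i)`, then `P[S_n^B = k] = B(n,k)/(2^n n!)` for `0 ≤ k ≤ n`. -/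
theorem stmt_5 (n : ℕ) (hn : 1 ≤ n)
    {Ω : Type*} [MeasurableSpace Ω] (μ : Measure Ω) [IsProbabilityMeasure μ]
    (X : Fin n → Ω → ℕ) (hmeas : ∀ i, Measurable (X i))
    (hind : iIndepFun X μ)
    (hX1 : ∀ i : Fin n, μ {ω | X i ω = 1} = 1 / (2 * ((i : ℕ) + 1) : ℝ≥0∞))
    (hX0 : ∀ i : Fin n, μ {ω | X i ω = 0} = 1 - 1 / (2 * ((i : ℕ) + 1) : ℝ≥0∞))
    (k : ℕ) (hk : k ≤ n) :
    μ {ω | ∑ i, X i ω = k} =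
      (stirlingB n k : ℝ≥0∞) / ((2 ^ n * n.factorial : ℕ) : ℝ≥0∞) :=
  stmt_5_general n μ X hmeas hind hX1 hX0 k
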